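/- arXiv:1910.14631 — 9 statements merged into one kernel-verified Lean document; each statement's English description precedes it below -/
import Mathlib

section
/- For every positive integer k and every complex number z, the polynomial identity holds: sum over i from 0 to k of i! * (z+i+1)(z+i+2)...(z+k) equals ( z(z+1)(z+2)...(z+k) - (k+1)! ) / (z-1), i.e., (z-1) * sum_{i=0}^{k} i! * prod_{j=i+1}^{k} (z+j) = z * prod_{j=1}^{k} (z+j) - (k+1)!. -/
open Finset

section FactorialSum

variable {R : Type*} [CommRing R]

theorem sum_range_succ_factorial_mul_prod_Icc (z : R) (k : ℕ) :
    ∑ i ∈ range (k + 2), (i.factorial : R) * ∏ j ∈ Icc (i + 1) (k + 1), (z + j) =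
      (∑ i ∈ range (k + 1), (i.factorial : R) * ∏ j ∈ Icc (i + 1) k, (z + j)) *
          (z + (k + 1 : ℕ)) + ((k + 1).factorial : R) := by
  have hlast : Icc (k + 1 + 1) (k + 1) = ∅ := Icc_eq_empty (by omega)
  rw [sum_range_succ, hlast, prod_empty, mul_one, sum_mul]
  congr 1
  refine sum_congr rfl fun i hi => ?_
  rw [prod_Icc_succ_top (by simp at hi; omega), mul_assoc]

/-- In the inductive step, `z - 1 = (z + k + 1) - (k + 2)` turns the new term `(k + 1)!` into
the `(k + 2)!` of the right-hand side. -/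
theorem sub_one_mul_sum_factorial_mul_prod_Icc (z : R) (k : ℕ) :
    (z - 1) * ∑ i ∈ range (k + 1), (i.factorial : R) * ∏ j ∈ Icc (i + 1) k, (z + j) =
      z * ∏ j ∈ Icc 1 k, (z + j) - ((k + 1).factorial : R) := by
  induction k with
  | zero => simp
  | succ k ih =>
    rw [sum_range_succ_factorial_mul_prod_Icc, prod_Icc_succ_top (by omega),
      Nat.factorial_succ (k + 1)]
    push_cast at ih ⊢
    linear_combination (z + k + 1) * ih

end FactorialSum

theorem stmt_0_general (k : ℕ) (z : ℂ) :
    (z - 1) * ∑ i ∈ Finset.range (k + 1),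
        (Nat.factorial i : ℂ) * ∏ j ∈ Finset.Icc (i + 1) k, (z + (j : ℂ)) =
      z * ∏ j ∈ Finset.Icc 1 k, (z + (j : ℂ)) - (Nat.factorial (k + 1) : ℂ) :=
  sub_one_mul_sum_factorial_mul_prod_Icc z k

theorem stmt_0 (k : ℕ) (hk : 0 < k) (z : ℂ) :
    (z - 1) * ∑ i ∈ Finset.range (k + 1),
        (Nat.factorial i : ℂ) * ∏ j ∈ Finset.Icc (i + 1) k, (z + (j : ℂ)) =
      z * ∏ j ∈ Finset.Icc 1 k, (z + (j : ℂ)) - (Nat.factorial (k + 1) : ℂ) :=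
  stmt_0_general k z
end

section
/- For every positive integer k and every complex number z, (z-1) times the expression 1 + 1!/(z+2) + 2!/((z+2)(z+3)) + ... + k!/((z+2)...(z+k+1)) times z(z+2)(z+3)...(z+k+1) equals (z+1)(z+2)...(z+k+1) - (k+1)!; equivalently, as polynomials, z * sum_{i=0}^{k} i! * prod_{j=i+2}^{k+1}(z+j) = prod_{j=1}^{k+1}(z+j) - (k+1)!. -/
/-! Writing `S k` for the sum, peeling off the last factor `z + (k + 2)` of every product gives
`S (k + 1) = (z + (k + 2)) * S k + (k + 1)!`, and the identity follows by induction on `k`,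
since multiplying `z * S k = ∏ (z + j) - (k + 1)!` by `z + (k + 2)` turns `(k + 1)!` into `(k + 2)!`. -/

open Finset

section

variable {R : Type*} [CommRing R]

lemma sum_factorial_mul_prod_Icc_succ (z : R) (k : ℕ) :
    ∑ i ∈ range (k + 2), (i.factorial : R) * ∏ j ∈ Icc (i + 2) (k + 2), (z + (j : R)) =
      (z + ((k + 2 : ℕ) : R)) *
          ∑ i ∈ range (k + 1), (i.factorial : R) * ∏ j ∈ Icc (i + 2) (k + 1), (z + (j : R)) +
        ((k + 1).factorial : R) := by
  rw [sum_range_succ, Icc_eq_empty (by omega), prod_empty, mul_one, mul_sum]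
  congr 1
  refine sum_congr rfl fun i hi => ?_
  rw [prod_Icc_succ_top (by simp at hi; omega)]
  ring

theorem mul_sum_factorial_mul_prod_Icc (z : R) (k : ℕ) :
    z * ∑ i ∈ range (k + 1), (i.factorial : R) * ∏ j ∈ Icc (i + 2) (k + 1), (z + (j : R)) =
      ∏ j ∈ Icc 1 (k + 1), (z + (j : R)) - ((k + 1).factorial : R) := by
  induction k with
  | zero => simp
  | succ k ih =>
    rw [sum_factorial_mul_prod_Icc_succ, prod_Icc_succ_top (by omega), Nat.factorial_succ (k + 1)]
    push_cast at ih ⊢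
    linear_combination (z + ((k : R) + 2)) * ih

end

theorem stmt_1_general (k : ℕ) (z : ℂ) :
    z * ∑ i ∈ Finset.range (k + 1),
        (Nat.factorial i : ℂ) * ∏ j ∈ Finset.Icc (i + 2) (k + 1), (z + (j : ℂ)) =
      ∏ j ∈ Finset.Icc 1 (k + 1), (z + (j : ℂ)) - (Nat.factorial (k + 1) : ℂ) :=
  mul_sum_factorial_mul_prod_Icc z k

theorem stmt_1 (k : ℕ) (hk : 0 < k) (z : ℂ) :
    z * ∑ i ∈ Finset.range (k + 1),
        (Nat.factorial i : ℂ) * ∏ j ∈ Finset.Icc (i + 2) (k + 1), (z + (j : ℂ)) =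
      ∏ j ∈ Finset.Icc 1 (k + 1), (z + (j : ℂ)) - (Nat.factorial (k + 1) : ℂ) :=
  stmt_1_general k z
end

section
/- Let k be a positive integer and let P(z) = ((z+1)(z+2)...(z+k) - k!)/z, regarded as a polynomial (the numerator is divisible by z). If z0 is a complex root of P, then |z0 + 1| <= k and |z0 + k| < k. -/
/-!
At a root `z₀` of `P` we have `∏ (z₀ + j) = k!`, and `z₀ ≠ 0` because `P(0)` is the derivative
of `∏ (X + j)` at `0`, a positive integer.

If `|z₀ + 1| > k`, the triangle inequality gives `|z₀ + (k + 1 - j)| > j` for every `j`, so the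
product of the `|z₀ + j|` exceeds `k!`. If `|z₀ + k| ≥ k`, note that `|z₀ + t|² - t² =
2t Re z₀ + |z₀|²` is affine in `t`, positive at `t = 0` and nonnegative at `t = k`; hence
`|z₀ + j| > j` for `0 < j < k`, and again the product exceeds `k!` (for `k = 1` the product
identity reads `z₀ + 1 = 1` instead).
-/

open Polynomial Finset Nat

lemma prod_Icc_one_reflect {M : Type*} [CommMonoid M] (f : ℕ → M) (k : ℕ) :
    ∏ j ∈ Icc 1 k, f (k + 1 - j) = ∏ j ∈ Icc 1 k, f j :=
  prod_nbij' (fun j ↦ k + 1 - j) (fun j ↦ k + 1 - j)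
    (fun j hj ↦ by simp only [mem_Icc] at hj ⊢; omega)
    (fun j hj ↦ by simp only [mem_Icc] at hj ⊢; omega)
    (fun j hj ↦ by simp only [mem_Icc] at hj; omega)
    (fun j hj ↦ by simp only [mem_Icc] at hj; omega) fun _ _ ↦ rfl

lemma prod_Icc_one_natCast_eq_factorial {R : Type*} [CommSemiring R] (k : ℕ) :
    ∏ j ∈ Icc 1 k, (j : R) = k ! := by
  rw [← Ico_add_one_right_eq_Icc, ← Nat.cast_prod, prod_Ico_id_eq_factorial]

lemma norm_add_one_le_of_prod_eq_factorial {k : ℕ} (hk : 0 < k) {z : ℂ}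
    (h : ∏ j ∈ Icc 1 k, (z + j) = k !) : ‖z + 1‖ ≤ k := by
  by_contra! hz
  have hfactor : ∀ j ∈ Icc 1 k, (j : ℝ) < ‖z + ((k + 1 - j : ℕ) : ℂ)‖ := by
    intro j hj
    rw [mem_Icc] at hj
    have hdist : ‖z + 1‖ - ‖z + ((k + 1 - j : ℕ) : ℂ)‖ ≤ k - j := by
      calc ‖z + 1‖ - ‖z + ((k + 1 - j : ℕ) : ℂ)‖
          ≤ ‖(z + 1) - (z + ((k + 1 - j : ℕ) : ℂ))‖ := norm_sub_norm_le _ _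
        _ = ‖((k - j : ℕ) : ℂ)‖ := by
          rw [← norm_neg]
          congr 1
          push_cast [Nat.cast_sub hj.2, Nat.cast_sub (by omega : j ≤ k + 1)]
          ring
        _ = k - j := by rw [Complex.norm_natCast, Nat.cast_sub hj.2]
    linarith
  have hlt : ∏ j ∈ Icc 1 k, (j : ℝ) < ∏ j ∈ Icc 1 k, ‖z + j‖ := by
    rw [← prod_Icc_one_reflect (fun j : ℕ ↦ ‖z + j‖)]
    exact prod_lt_prod_of_nonempty (fun j hj ↦ Nat.cast_pos.2 (mem_Icc.1 hj).1) hfactor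
      ⟨1, mem_Icc.2 ⟨le_rfl, hk⟩⟩
  rw [prod_Icc_one_natCast_eq_factorial, ← norm_prod, h, Complex.norm_natCast] at hlt
  exact hlt.false

lemma lt_norm_add_of_le_norm_add {z : ℂ} (hz : z ≠ 0) {s t : ℝ} (hs : 0 ≤ s) (hst : s < t)
    (ht : t ≤ ‖z + t‖) : s < ‖z + s‖ := by
  have hsq : ∀ u : ℝ, ‖z + u‖ ^ 2 = u ^ 2 + 2 * u * z.re + ‖z‖ ^ 2 := by
    intro u
    simp only [Complex.sq_norm, Complex.normSq_apply, Complex.add_re, Complex.add_im,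
      Complex.ofReal_re, Complex.ofReal_im]
    ring
  have hr : 0 < ‖z‖ ^ 2 := by positivity
  have ht2 : t ^ 2 ≤ ‖z + t‖ ^ 2 := pow_le_pow_left₀ (by linarith) ht 2
  refine lt_of_pow_lt_pow_left₀ 2 (norm_nonneg _) ?_
  rw [hsq] at ht2 ⊢
  nlinarith [mul_pos (sub_pos.2 hst) hr]

lemma norm_add_lt_of_prod_eq_factorial {k : ℕ} (hk : 0 < k) {z : ℂ} (hz : z ≠ 0)
    (h : ∏ j ∈ Icc 1 k, (z + j) = k !) : ‖z + k‖ < k := by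
  by_contra! hkz
  obtain rfl | hk1 : k = 1 ∨ 1 < k := by omega
  · exact hz (by simpa using h)
  have hfactor : ∀ j ∈ Icc 1 k, (j : ℝ) ≤ ‖z + j‖ := by
    intro j hj
    rcases (mem_Icc.1 hj).2.lt_or_eq with hjk | rfl
    · exact (lt_norm_add_of_le_norm_add (t := k) hz j.cast_nonneg (by exact_mod_cast hjk)
        (by exact_mod_cast hkz)).le
    · exact hkz
  have hlt : ∏ j ∈ Icc 1 k, (j : ℝ) < ∏ j ∈ Icc 1 k, ‖z + j‖ :=
    prod_lt_prod (fun j hj ↦ Nat.cast_pos.2 (mem_Icc.1 hj).1) hfactor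
      ⟨1, mem_Icc.2 ⟨le_rfl, hk⟩, by
        exact_mod_cast lt_norm_add_of_le_norm_add (t := k) hz zero_le_one (by exact_mod_cast hk1)
          (by exact_mod_cast hkz)⟩
  rw [prod_Icc_one_natCast_eq_factorial, ← norm_prod, h, Complex.norm_natCast] at hlt
  exact hlt.false

lemma eval_zero_eq_derivative_eval_zero {R : Type*} [CommRing R] {P F : R[X]} {c : R}
    (h : X * P = F - C c) : P.eval 0 = F.derivative.eval 0 := by
  simpa using congrArg (fun Q ↦ (derivative Q).eval 0) h

lemma derivative_prod_X_add_natCast_eval_zero (s : Finset ℕ) :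
    (∏ j ∈ s, (X + C (j : ℂ))).derivative.eval 0 = ((∑ i ∈ s, ∏ j ∈ s.erase i, j : ℕ) : ℂ) := by
  classical
  simp [derivative_prod_finset, eval_finsetSum, eval_prod]

lemma eval_zero_ne_zero_of_X_mul_eq {k : ℕ} (hk : 0 < k) {P : ℂ[X]}
    (hP : X * P = ∏ j ∈ Icc 1 k, (X + C (j : ℂ)) - C (k ! : ℂ)) : P.eval 0 ≠ 0 := by
  rw [eval_zero_eq_derivative_eval_zero hP, derivative_prod_X_add_natCast_eval_zero,
    Nat.cast_ne_zero]
  refine (sum_pos (fun i _ ↦ prod_pos fun j hj ↦ ?_) ⟨k, mem_Icc.2 ⟨hk, le_rfl⟩⟩).ne'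
  exact (mem_Icc.1 (mem_of_mem_erase hj)).1

theorem stmt_2 (k : ℕ) (hk : 0 < k) (P : Polynomial ℂ)
    (hP : ∀ z : ℂ, z * P.eval z =
      ∏ j ∈ Finset.Icc 1 k, (z + (j : ℂ)) - (Nat.factorial k : ℂ))
    (z0 : ℂ) (hz0 : P.eval z0 = 0) :
    ‖z0 + 1‖ ≤ k ∧ ‖z0 + k‖ < k := by
  have hprod : ∏ j ∈ Icc 1 k, (z0 + j) = k ! := by
    linear_combination -(hP z0) + z0 * hz0
  have hpoly : X * P = ∏ j ∈ Icc 1 k, (X + C (j : ℂ)) - C (k ! : ℂ) :=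
    Polynomial.funext fun z ↦ by simpa [eval_prod] using hP z
  have hz0_ne : z0 ≠ 0 := by
    rintro rfl
    exact eval_zero_ne_zero_of_X_mul_eq hk hpoly hz0
  exact ⟨norm_add_one_le_of_prod_eq_factorial hk hprod,
    norm_add_lt_of_prod_eq_factorial hk hz0_ne hprod⟩
end

section
/- Let k be a positive integer and let P be the polynomial satisfying z * P(z) = (z+1)(z+2)...(z+k) - k!. If z is a complex number with |z + (k+1)| >= k+1, then |P(z)| >= (k-1)!. -/
open Finset Polynomial

noncomputable def Complex.abs : AbsoluteValue ℂ ℝ where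
  toFun w := ‖w‖
  map_mul' := norm_mul
  nonneg' := norm_nonneg
  eq_zero' _ := norm_eq_zero
  add_le' := norm_add_le

lemma Complex.abs_apply (w : ℂ) : Complex.abs w = Real.sqrt (Complex.normSq w) :=
  Complex.norm_def w

lemma Complex.sq_abs (w : ℂ) : (Complex.abs w)^2 = Complex.normSq w := Complex.sq_norm w

lemma Complex.re_le_abs (w : ℂ) : w.re ≤ Complex.abs w := Complex.re_le_norm w

lemma Complex.abs_re_le_abs (w : ℂ) : |w.re| ≤ Complex.abs w := Complex.abs_re_le_norm w

lemma Complex.abs_natCast (n : ℕ) : Complex.abs (n : ℂ) = n := Complex.norm_natCast n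

lemma Complex.abs_ofReal (r : ℝ) : Complex.abs (r : ℂ) = |r| := Complex.norm_real r

-- factorial as complex product over Icc
lemma prodIccNat (k : ℕ) : (∏ j ∈ Icc 1 k, j) = k.factorial := by
  rw [← Finset.Ico_add_one_right_eq_Icc]; exact Finset.prod_Ico_id_eq_factorial k

-- nat product split
lemma prodSplit (m k : ℕ) (h : m + 1 ≤ k) :
    (∏ j ∈ Icc (m+1) k, j) = (m+1) * ∏ j ∈ Icc (m+2) k, j := by
  rw [Finset.Icc_eq_cons_Ioc h, Finset.prod_cons, ← Finset.Icc_add_one_left_eq_Ioc]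
  rfl

-- telescoping identity
lemma tele (k : ℕ) (w : ℂ) :
    w * ∑ m ∈ range k, ((∏ j ∈ Icc (m+2) k, j : ℕ) : ℂ) * ∏ j ∈ Icc 1 m, (w + (j:ℂ))
      = ∏ j ∈ Icc 1 k, (w + (j:ℂ)) - ((Nat.factorial k : ℕ) : ℂ) := by
  have h := Finset.sum_range_sub
    (fun m => (∏ j ∈ Icc 1 m, (w + (j:ℂ))) * ((∏ j ∈ Icc (m+1) k, j : ℕ) : ℂ)) k
  rw [Finset.mul_sum]
  rw [Finset.sum_congr rfl (fun m hm => ?_)] -- transform terms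
  · rw [h]
    have h1 : Icc (k+1) k = (∅ : Finset ℕ) := Finset.Icc_eq_empty (by omega)
    have h2 : Icc 1 0 = (∅ : Finset ℕ) := Finset.Icc_eq_empty (by omega)
    rw [h1, h2]
    simp [prodIccNat k]
  · have hmk : m + 1 ≤ k := Finset.mem_range.1 hm
    rw [Finset.prod_Icc_succ_top (by omega : 1 ≤ m + 1)]
    rw [prodSplit m k hmk]
    push_cast
    ring

lemma habs_of_sq {w : ℂ} {c : ℝ} (hc : 0 ≤ c) (h : c^2 ≤ Complex.normSq w) :
    c ≤ Complex.abs w := by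
  rw [Complex.abs_apply]
  exact (Real.le_sqrt hc (Complex.normSq_nonneg w)).2 h

lemma hsum_nonneg (m : ℕ) : 0 ≤ ∑ j ∈ Icc 1 m, (1:ℝ)/j :=
  Finset.sum_nonneg fun j _ => by positivity

lemma hk46 : ∀ k : ℕ, 5 ≤ k → (∑ j ∈ Icc 1 k, (1:ℝ)/j) ≤ 23/50 * k := by
  intro k hk
  induction k, hk using Nat.le_induction with
  | base =>
    rw [show Icc 1 5 = {1,2,3,4,5} from rfl]
    norm_num
  | succ n hn ih =>
    rw [Finset.sum_Icc_succ_top (by omega : 1 ≤ n + 1)]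
    have : (1:ℝ)/(n+1) ≤ 23/50 := by
      rw [div_le_div_iff₀ (by positivity) (by norm_num)]
      have : (5:ℝ) ≤ (n:ℝ) := by exact_mod_cast hn
      nlinarith
    push_cast
    push_cast at ih
    linarith

-- W lemma
lemma Wlem (z : ℂ) (m : ℕ) :
    Complex.abs ((∏ j ∈ Icc 1 m, (1 + z/(j:ℂ))) - 1
        - ((∑ j ∈ Icc 1 m, (1:ℝ)/j : ℝ) : ℂ) * z)
      ≤ (∏ j ∈ Icc 1 m, (1 + Complex.abs z/(j:ℝ))) - 1
        - (∑ j ∈ Icc 1 m, (1:ℝ)/j) * Complex.abs z := by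
  induction m with
  | zero => simp
  | succ n ih =>
    have h1 : (1:ℕ) ≤ n + 1 := by omega
    rw [Finset.prod_Icc_succ_top h1, Finset.prod_Icc_succ_top h1,
        Finset.sum_Icc_succ_top h1]
    set F := ∏ j ∈ Icc 1 n, (1 + z/(j:ℂ)) with hF
    set G := ∏ j ∈ Icc 1 n, (1 + Complex.abs z/(j:ℝ)) with hG
    set hm := ∑ j ∈ Icc 1 n, (1:ℝ)/j with hhmdef
    set s := Complex.abs z with hsdef
    have hs : 0 ≤ s := Complex.abs.nonneg z
    have hhm : 0 ≤ hm := hsum_nonneg n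
    have hneC : ((n+1:ℕ):ℂ) ≠ 0 := by exact_mod_cast Nat.succ_ne_zero n
    have hneR : ((n+1:ℕ):ℝ) ≠ 0 := by exact_mod_cast Nat.succ_ne_zero n
    have key : F * (1 + z/((n+1:ℕ):ℂ)) - 1 - ((hm + 1/((n+1:ℕ):ℝ) : ℝ) : ℂ) * z
        = (F - 1 - (hm:ℂ) * z) * (1 + z/((n+1:ℕ):ℂ))
          + (hm:ℂ) * z^2 / ((n+1:ℕ):ℂ) := by
      have : ((hm + 1/((n+1:ℕ):ℝ) : ℝ) : ℂ) = (hm:ℂ) + 1/((n+1:ℕ):ℂ) := by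
        push_cast
        ring
      rw [this]
      field_simp
      ring
    rw [key]
    have h2 : Complex.abs (1 + z/((n+1:ℕ):ℂ)) ≤ 1 + s/((n+1:ℕ):ℝ) := by
      calc Complex.abs (1 + z/((n+1:ℕ):ℂ)) ≤ 1 + Complex.abs (z/((n+1:ℕ):ℂ)) := by
            simpa using Complex.abs.add_le 1 (z/((n+1:ℕ):ℂ))
        _ = 1 + s/((n+1:ℕ):ℝ) := by rw [map_div₀, Complex.abs_natCast]
    have e1 : Complex.abs ((F - 1 - (hm:ℂ)*z) * (1 + z/((n+1:ℕ):ℂ)))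
        ≤ (G - 1 - hm*s) * (1 + s/((n+1:ℕ):ℝ)) := by
      rw [map_mul]
      exact mul_le_mul ih h2 (Complex.abs.nonneg _) (le_trans (Complex.abs.nonneg _) ih)
    have e2 : Complex.abs ((hm:ℂ) * z^2 / ((n+1:ℕ):ℂ)) = hm * s^2 / ((n+1:ℕ):ℝ) := by
      rw [map_div₀, map_mul, map_pow, Complex.abs_ofReal, Complex.abs_natCast,
        abs_of_nonneg hhm]
    have e3 : (G - 1 - hm*s) * (1 + s/((n+1:ℕ):ℝ)) + hm * s^2 / ((n+1:ℕ):ℝ)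
        = G * (1 + s/((n+1:ℕ):ℝ)) - 1 - (hm + 1/((n+1:ℕ):ℝ)) * s := by
      field_simp
      ring
    calc Complex.abs _ ≤ Complex.abs ((F - 1 - (hm:ℂ) * z) * (1 + z/((n+1:ℕ):ℂ)))
          + Complex.abs ((hm:ℂ) * z^2 / ((n+1:ℕ):ℂ)) := Complex.abs.add_le _ _
      _ ≤ (G - 1 - hm*s) * (1 + s/((n+1:ℕ):ℝ)) + hm * s^2 / ((n+1:ℕ):ℝ) := by
          rw [e2]; exact add_le_add_left e1 _
      _ = _ := e3

set_option maxHeartbeats 1000000 in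
lemma ReF (k m : ℕ) (hk5 : 5 ≤ k) (hmk : m < k) (z : ℂ)
    (hxs : 0 ≤ (Complex.abs z)^2 + 2*((k:ℝ)+1)*z.re)
    (hsmall : Complex.abs z ≤ 2/(k:ℝ)) :
    (1:ℝ)/4 ≤ (∏ j ∈ Icc 1 m, (1 + z/(j:ℂ))).re := by
  set s := Complex.abs z with hsdef
  set x := z.re with hxdef
  set hm := ∑ j ∈ Icc 1 m, (1:ℝ)/j with hmdef
  have hs0 : 0 ≤ s := Complex.abs.nonneg z
  have hhm : 0 ≤ hm := hsum_nonneg m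
  have hkR : (5:ℝ) ≤ (k:ℝ) := by exact_mod_cast hk5
  have hkpos : (0:ℝ) < (k:ℝ) := by linarith
  have hmle : hm ≤ ∑ j ∈ Icc 1 k, (1:ℝ)/j := by
    apply Finset.sum_le_sum_of_subset_of_nonneg
    · exact Finset.Icc_subset_Icc_right hmk.le
    · intro j _ _; positivity
  have hma : hm ≤ 23/50 * k := le_trans hmle (hk46 k hk5)
  have hu1 : hm * s ≤ 23/25 := by
    have h2 : hm * s ≤ (23/50 * k) * (2/(k:ℝ)) :=
      mul_le_mul hma hsmall hs0 (by positivity)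
    have h3 : (23/50 * (k:ℝ)) * (2/(k:ℝ)) = 23/25 := by field_simp; ring
    linarith
  have hu0 : 0 ≤ hm * s := mul_nonneg hhm hs0
  -- G ≤ exp (hm*s)
  have hGexp : (∏ j ∈ Icc 1 m, (1 + s/(j:ℝ))) ≤ Real.exp (hm * s) := by
    have : Real.exp (hm * s) = ∏ j ∈ Icc 1 m, Real.exp (s/(j:ℝ)) := by
      rw [← Real.exp_sum]
      congr 1
      rw [hmdef, Finset.sum_mul]
      exact Finset.sum_congr rfl fun j _ => by ring
    rw [this]
    apply Finset.prod_le_prod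
    · intro j hj; positivity
    · intro j hj
      have := Real.add_one_le_exp (s/(j:ℝ)); linarith
  -- exp bound
  have hexpb : Real.exp (hm * s) ≤ 1 + hm * s + 3/4 * (hm * s)^2 := by
    have hb := Real.exp_bound (x := hm * s) (by rw [abs_of_nonneg hu0]; linarith)
      (n := 2) (by norm_num)
    rw [show ∑ i ∈ range 2, (hm*s)^i / (i.factorial:ℝ) = 1 + hm*s by
        simp [Finset.sum_range_succ], abs_of_nonneg hu0] at hb
    norm_num [Nat.factorial] at hb
    have h10 := abs_le.1 hb
    linarith [h10.2]
  -- W bound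
  have hW : Complex.abs ((∏ j ∈ Icc 1 m, (1 + z/(j:ℂ))) - 1 - (hm:ℂ) * z)
      ≤ 1587/2500 := by
    have h1 := Wlem z m
    have h2 : (∏ j ∈ Icc 1 m, (1 + s/(j:ℝ))) - 1 - hm * s
        ≤ Real.exp (hm*s) - 1 - hm*s := by linarith [hGexp]
    have h3 : Real.exp (hm*s) - 1 - hm*s ≤ 3/4 * (hm*s)^2 := by linarith
    have h4 : (hm*s)^2 ≤ (23/25)^2 := by nlinarith
    calc Complex.abs _ ≤ (∏ j ∈ Icc 1 m, (1 + s/(j:ℝ))) - 1 - hm * s := h1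
      _ ≤ 3/4 * (hm*s)^2 := by linarith
      _ ≤ 1587/2500 := by nlinarith
  -- x lower bound
  have hx : -(s^2/(2*((k:ℝ)+1))) ≤ x := by
    have hd : (0:ℝ) < 2*((k:ℝ)+1) := by linarith
    rw [neg_le, le_div_iff₀ hd]
    linarith
  have h2s : hm * s^2 ≤ 46/(25*(k:ℝ)) := by
    have hsq : s^2 ≤ (2/(k:ℝ))^2 := by nlinarith
    have h2 : hm * s^2 ≤ (23/50*k) * (2/(k:ℝ))^2 :=
      mul_le_mul hma hsq (by positivity) (by positivity)
    have h3 : (23/50*(k:ℝ)) * (2/(k:ℝ))^2 = 46/(25*(k:ℝ)) := by field_simp; ring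
    linarith
  have h5 : (hm * s^2)/(2*((k:ℝ)+1)) ≤ 23/750 := by
    have hd : (0:ℝ) < 2*((k:ℝ)+1) := by linarith
    rw [div_le_iff₀ hd]
    have h6 : 46/(25*(k:ℝ)) ≤ 23/750 * (2*((k:ℝ)+1)) := by
      have h30 : (30:ℝ) ≤ (k:ℝ)*((k:ℝ)+1) := by nlinarith
      rw [div_le_iff₀ (by positivity)]
      nlinarith [h30]
    linarith
  have h1' : -((hm * s^2)/(2*((k:ℝ)+1))) ≤ hm * x := by
    have h7 := mul_le_mul_of_nonneg_left hx hhm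
    calc -((hm*s^2)/(2*((k:ℝ)+1))) = hm * (-(s^2/(2*((k:ℝ)+1)))) := by ring
      _ ≤ hm * x := h7
  have hmx : -(23/750) ≤ hm * x := by linarith
  -- conclude
  have hdec : (∏ j ∈ Icc 1 m, (1 + z/(j:ℂ))).re
      = ((∏ j ∈ Icc 1 m, (1 + z/(j:ℂ))) - 1 - (hm:ℂ)*z).re + 1 + hm * x := by
    simp only [Complex.sub_re, Complex.add_re, Complex.one_re, Complex.mul_re,
      Complex.ofReal_re, Complex.ofReal_im]
    ring
  have hWre := Complex.abs_re_le_abs ((∏ j ∈ Icc 1 m, (1 + z/(j:ℂ))) - 1 - (hm:ℂ)*z)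
  have hWre2 := neg_abs_le (((∏ j ∈ Icc 1 m, (1 + z/(j:ℂ))) - 1 - (hm:ℂ)*z).re)
  rw [hdec]
  linarith

lemma prodTail (k : ℕ) (hk : 1 ≤ k) : (∏ j ∈ Icc 2 k, j) = k.factorial := by
  have h := prodIccNat k
  rw [Finset.Icc_eq_cons_Ioc hk, Finset.prod_cons, ← Finset.Icc_add_one_left_eq_Ioc] at h
  simpa using h

lemma caseA (k : ℕ) (hk5 : 5 ≤ k) (z : ℂ)
    (hxs : 0 ≤ (Complex.abs z)^2 + 2*((k:ℝ)+1)*z.re)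
    (hsmall : Complex.abs z ≤ 2/(k:ℝ)) :
    ((k-1).factorial : ℝ) ≤ Complex.abs
      (∑ m ∈ range k, ((∏ j ∈ Icc (m+2) k, j : ℕ) : ℂ) * ∏ j ∈ Icc 1 m, (z + (j:ℂ))) := by
  have hterm : ∀ m, m < k →
      ((m.factorial * ∏ j ∈ Icc (m+2) k, j : ℕ) : ℝ) / 4
        ≤ (((∏ j ∈ Icc (m+2) k, j : ℕ) : ℂ) * ∏ j ∈ Icc 1 m, (z + (j:ℂ))).re := by
    intro m hmk
    have hsplit : (∏ j ∈ Icc 1 m, (z + (j:ℂ)))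
        = ((m.factorial : ℕ) : ℂ) * ∏ j ∈ Icc 1 m, (1 + z/(j:ℂ)) := by
      rw [← prodIccNat m]
      push_cast
      rw [← Finset.prod_mul_distrib]
      refine Finset.prod_congr rfl fun j hj => ?_
      have hj1 : (1:ℕ) ≤ j := (Finset.mem_Icc.1 hj).1
      have : (j:ℂ) ≠ 0 := by
        exact_mod_cast Nat.one_le_iff_ne_zero.1 hj1
      field_simp
      ring
    rw [hsplit]
    have e1 : (((∏ j ∈ Icc (m+2) k, j : ℕ) : ℂ) * (((m.factorial : ℕ) : ℂ)
        * ∏ j ∈ Icc 1 m, (1 + z/(j:ℂ)))).re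
        = ((m.factorial * ∏ j ∈ Icc (m+2) k, j : ℕ) : ℝ)
          * (∏ j ∈ Icc 1 m, (1 + z/(j:ℂ))).re := by
      rw [show (((∏ j ∈ Icc (m+2) k, j : ℕ) : ℂ) * (((m.factorial : ℕ) : ℂ)
        * ∏ j ∈ Icc 1 m, (1 + z/(j:ℂ))))
        = (((m.factorial * ∏ j ∈ Icc (m+2) k, j : ℕ) : ℝ) : ℂ)
          * ∏ j ∈ Icc 1 m, (1 + z/(j:ℂ)) by push_cast; ring]
      exact Complex.re_ofReal_mul _ _
    rw [e1]
    have h4 := ReF k m hk5 hmk z hxs hsmall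
    have hN : (0:ℝ) ≤ ((m.factorial * ∏ j ∈ Icc (m+2) k, j : ℕ) : ℝ) := by positivity
    calc ((m.factorial * ∏ j ∈ Icc (m+2) k, j : ℕ) : ℝ) / 4
        = ((m.factorial * ∏ j ∈ Icc (m+2) k, j : ℕ) : ℝ) * (1/4) := by ring
      _ ≤ _ := mul_le_mul_of_nonneg_left (by linarith) hN
  have hre : (((k-1).factorial : ℕ) : ℝ) ≤
      (∑ m ∈ range k, ((∏ j ∈ Icc (m+2) k, j : ℕ) : ℂ) * ∏ j ∈ Icc 1 m, (z + (j:ℂ))).re := by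
    rw [Complex.re_sum]
    have hsum : ∀ m ∈ range k, (0:ℝ) ≤
        ((((∏ j ∈ Icc (m+2) k, j : ℕ) : ℂ) * ∏ j ∈ Icc 1 m, (z + (j:ℂ))).re) := by
      intro m hm
      have h3 : (0:ℝ) ≤ ((m.factorial * ∏ j ∈ Icc (m+2) k, j : ℕ) : ℝ) / 4 := by positivity
      linarith [hterm m (Finset.mem_range.1 hm)]
    have h1 := hterm 0 (by omega)
    have h2 : (Nat.factorial 0) * ∏ j ∈ Icc (0+2) k, j = k.factorial := by
      have := prodTail k (by omega : 1 ≤ k)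
      simpa [Nat.factorial] using this
    rw [h2] at h1
    have hsingle := Finset.single_le_sum hsum (Finset.mem_range.2 (by omega : 0 < k))
    have hfac : (((k-1).factorial : ℕ) : ℝ) ≤ ((k.factorial : ℕ) : ℝ) / 4 := by
      have h4 : (k-1).factorial * 4 ≤ k.factorial := by
        calc (k-1).factorial * 4 ≤ (k-1).factorial * k := by
              exact Nat.mul_le_mul_left _ (by omega)
          _ = k * (k-1).factorial := by ring
          _ = k.factorial := Nat.mul_factorial_pred (by omega)
      rw [le_div_iff₀ (by norm_num)]
      exact_mod_cast h4
    linarith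
  exact le_trans hre (Complex.re_le_abs _)

lemma habs_of_sq' {w : ℂ} {c : ℝ} (hc : 0 ≤ c) (h : c^2 ≤ Complex.normSq w) :
    c ≤ Complex.abs w := by
  rw [Complex.abs_apply]
  exact (Real.le_sqrt hc (Complex.normSq_nonneg w)).2 h

set_option maxHeartbeats 1000000 in
lemma caseB (k : ℕ) (hk5 : 5 ≤ k) (z : ℂ)
    (hxs : 0 ≤ (Complex.abs z)^2 + 2*((k:ℝ)+1)*z.re)
    (hbig : 2/(k:ℝ) ≤ Complex.abs z) :
    ((k.factorial : ℕ) : ℝ) * (1 + Complex.abs z/(k:ℝ))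
      ≤ Complex.abs (∏ j ∈ Icc 1 k, (z + (j:ℂ))) := by
  set s := Complex.abs z with hsdef
  set x := z.re with hxdef
  have hkR : (5:ℝ) ≤ (k:ℝ) := by exact_mod_cast hk5
  have hkpos : (0:ℝ) < (k:ℝ) := by linarith
  have hs0 : 0 ≤ s := Complex.abs.nonneg z
  have hsq : s^2 = x^2 + z.im^2 := by
    rw [hsdef, Complex.sq_abs, Complex.normSq_apply]; ring
  -- per-factor bound
  have hfac : ∀ j : ℕ, j ∈ Icc 1 k →
      (j:ℝ)^2 + s^2*((k:ℝ)+1-(j:ℝ))/((k:ℝ)+1) ≤ Complex.normSq (z + (j:ℂ)) := by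
    intro j hj
    obtain ⟨hj1, hjk⟩ := Finset.mem_Icc.1 hj
    have hjR : (j:ℝ) ≤ (k:ℝ) := by exact_mod_cast hjk
    have hjR0 : (0:ℝ) ≤ (j:ℝ) := by positivity
    have hns : Complex.normSq (z + (j:ℂ)) = s^2 + 2*(j:ℝ)*x + (j:ℝ)^2 := by
      rw [Complex.normSq_apply]
      simp only [Complex.add_re, Complex.add_im, Complex.natCast_re, Complex.natCast_im]
      rw [hsq]; ring
    rw [hns]
    have hmul := mul_nonneg hjR0 hxs
    have hkey : s^2*((k:ℝ)+1-(j:ℝ))/((k:ℝ)+1) ≤ s^2 + 2*(j:ℝ)*x := by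
      rw [div_le_iff₀ (by linarith : (0:ℝ) < (k:ℝ)+1)]
      nlinarith [hmul]
    linarith
  -- normSq of product
  have hA : Complex.normSq (∏ j ∈ Icc 1 k, (z + (j:ℂ)))
      = ∏ j ∈ Icc 1 k, Complex.normSq (z + (j:ℂ)) := map_prod Complex.normSq _ _
  -- split product
  have hsplit : ∏ j ∈ Icc 1 k, Complex.normSq (z + (j:ℂ))
      = (∏ j ∈ Ico (1:ℕ) 5, Complex.normSq (z + (j:ℂ)))
        * ∏ j ∈ Ico 5 (k+1), Complex.normSq (z + (j:ℂ)) := by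
    rw [← Finset.Ico_add_one_right_eq_Icc]
    exact (Finset.prod_Ico_consecutive _ (by omega) (by omega)).symm
  -- tail ≥ ∏ j²
  have htail : (∏ j ∈ Ico 5 (k+1), ((j:ℝ))^2)
      ≤ ∏ j ∈ Ico 5 (k+1), Complex.normSq (z + (j:ℂ)) := by
    apply Finset.prod_le_prod
    · intro j hj; positivity
    · intro j hj
      obtain ⟨hj5, hjk⟩ := Finset.mem_Ico.1 hj
      have hj' : j ∈ Icc 1 k := Finset.mem_Icc.2 ⟨by omega, by omega⟩
      have h1 := hfac j hj'
      have hjR : (j:ℝ) ≤ (k:ℝ) := by exact_mod_cast (by omega : j ≤ k)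
      have h2 : 0 ≤ s^2*((k:ℝ)+1-(j:ℝ))/((k:ℝ)+1) := by
        apply div_nonneg _ (by linarith)
        apply mul_nonneg (by positivity) (by linarith)
      linarith
  -- head ≥ 576 (1+s/k)^2
  have hhead : 576 * (1 + s/(k:ℝ))^2
      ≤ ∏ j ∈ Ico (1:ℕ) 5, Complex.normSq (z + (j:ℂ)) := by
    have e5 : (Ico 1 5 : Finset ℕ) = {1, 2, 3, 4} := rfl
    rw [e5]
    rw [show (∏ j ∈ ({1,2,3,4} : Finset ℕ), Complex.normSq (z + (j:ℂ)))
        = Complex.normSq (z+1) * (Complex.normSq (z+2) * (Complex.normSq (z+3)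
          * Complex.normSq (z+4))) by
      rw [Finset.prod_insert (by decide), Finset.prod_insert (by decide),
        Finset.prod_insert (by decide), Finset.prod_singleton]
      norm_num]
    set t := s^2/((k:ℝ)+1) with htdef
    have ht0 : 0 ≤ t := by positivity
    have hf1 := hfac 1 (Finset.mem_Icc.2 ⟨le_refl 1, by omega⟩)
    have hf2 := hfac 2 (Finset.mem_Icc.2 ⟨by omega, by omega⟩)
    have hf3 := hfac 3 (Finset.mem_Icc.2 ⟨by omega, by omega⟩)
    have hf4 := hfac 4 (Finset.mem_Icc.2 ⟨by omega, by omega⟩)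
    have ed : ∀ j : ℕ, s^2*((k:ℝ)+1-(j:ℝ))/((k:ℝ)+1) = t*((k:ℝ)+1-(j:ℝ)) := by
      intro j; rw [htdef]; ring
    rw [ed 1] at hf1; rw [ed 2] at hf2; rw [ed 3] at hf3; rw [ed 4] at hf4
    push_cast at hf1 hf2 hf3 hf4
    norm_num at hf1 hf2 hf3 hf4
    rw [show (k:ℝ)+1-2 = (k:ℝ)-1 by ring] at hf2
    rw [show (k:ℝ)+1-3 = (k:ℝ)-2 by ring] at hf3
    rw [show (k:ℝ)+1-4 = (k:ℝ)-3 by ring] at hf4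
    -- scalar inequality
    have hd1 : (0:ℝ) ≤ t*(k:ℝ) := by apply mul_nonneg ht0; linarith
    have hd2 : (0:ℝ) ≤ t*((k:ℝ)-1) := by apply mul_nonneg ht0; linarith
    have hd3 : (0:ℝ) ≤ t*((k:ℝ)-2) := by apply mul_nonneg ht0; linarith
    have hd4 : (0:ℝ) ≤ t*((k:ℝ)-3) := by apply mul_nonneg ht0; linarith
    have hns1 : (0:ℝ) ≤ Complex.normSq (z+1) := Complex.normSq_nonneg _
    have hns2 : (0:ℝ) ≤ Complex.normSq (z+2) := Complex.normSq_nonneg _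
    have hns3 : (0:ℝ) ≤ Complex.normSq (z+3) := Complex.normSq_nonneg _
    have hns4 : (0:ℝ) ≤ Complex.normSq (z+4) := Complex.normSq_nonneg _
    -- key scalar: product of lower bounds ≥ 576 (1+s/k)^2
    have hkey : 576 * (1 + s/(k:ℝ))^2
        ≤ (1 + t*(k:ℝ)) * ((4 + t*((k:ℝ)-1)) * ((9 + t*((k:ℝ)-2))
          * (16 + t*((k:ℝ)-3)))) := by
      set a := t*(k:ℝ) with ha
      set b := t*((k:ℝ)-1) with hb
      set c := t*((k:ℝ)-2) with hc
      set d := t*((k:ℝ)-3) with hd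
      have h12 : (4:ℝ) + 4*a + b ≤ (1+a)*(4+b) := by nlinarith [mul_nonneg hd1 hd2]
      have h34 : (144:ℝ) + 16*c + 9*d ≤ (9+c)*(16+d) := by nlinarith [mul_nonneg hd3 hd4]
      have hstep : (4 + 4*a + b) * (144 + 16*c + 9*d)
          ≤ (1+a)*(4+b) * ((9+c)*(16+d)) := by
        apply mul_le_mul h12 h34 (by linarith) (by nlinarith [mul_nonneg hd1 hd2])
      have hexp : 576 + 576*a + 144*b + 64*c + 36*d
          ≤ (4 + 4*a + b) * (144 + 16*c + 9*d) := by
        nlinarith [mul_nonneg hd1 hd3, mul_nonneg hd1 hd4, mul_nonneg hd2 hd3,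
          mul_nonneg hd2 hd4]
      -- sum bound: a + b/4 + c/9 + d/16 ≥ 2 s/k + s²/k²
      have hsumb : 2*s/(k:ℝ) + s^2/(k:ℝ)^2 ≤ a + b/4 + c/9 + d/16 := by
        have habcd : a + b/4 + c/9 + d/16 = s^2 * ((205*(k:ℝ) - 95)/(144*((k:ℝ)+1))) := by
          rw [ha, hb, hc, hd, htdef]
          field_simp
          ring
        have h61 : 239*(k:ℝ)^2 + 144*(k:ℝ) + 144 ≤ 61*(k:ℝ)^3 := by nlinarith
        have hC : 1 + 1/(k:ℝ)^2 ≤ (205*(k:ℝ) - 95)/(144*((k:ℝ)+1)) := by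
          have e2 : 1 + 1/(k:ℝ)^2 = ((k:ℝ)^2+1)/(k:ℝ)^2 := by field_simp
          rw [e2, div_le_div_iff₀ (by positivity) (by positivity)]
          nlinarith [h61]
        have h2s : 2*s/(k:ℝ) ≤ s^2 := by
          have h7 : 2/(k:ℝ) * s ≤ s * s := mul_le_mul_of_nonneg_right hbig hs0
          calc 2*s/(k:ℝ) = 2/(k:ℝ) * s := by ring
            _ ≤ s * s := h7
            _ = s^2 := by ring
        have hs2k : s^2/(k:ℝ)^2 = s^2 * (1/(k:ℝ)^2) := by ring
        calc 2*s/(k:ℝ) + s^2/(k:ℝ)^2 ≤ s^2 + s^2 * (1/(k:ℝ)^2) := by rw [hs2k]; linarith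
          _ = s^2 * (1 + 1/(k:ℝ)^2) := by ring
          _ ≤ s^2 * ((205*(k:ℝ) - 95)/(144*((k:ℝ)+1))) :=
              mul_le_mul_of_nonneg_left hC (by positivity)
          _ = a + b/4 + c/9 + d/16 := habcd.symm
      have hfin : 576*(1 + s/(k:ℝ))^2 ≤ 576 + 576*a + 144*b + 64*c + 36*d := by
        have e : 576*(1 + s/(k:ℝ))^2 = 576 + 576*(2*s/(k:ℝ)) + 576*(s^2/(k:ℝ)^2) := by
          field_simp
          ring
        rw [e]
        linarith [hsumb]
      linarith [hstep, hexp, hfin]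
    calc 576 * (1 + s/(k:ℝ))^2 ≤ _ := hkey
      _ ≤ _ := by
        have hd1' : (0:ℝ) ≤ t*(k:ℝ) := by apply mul_nonneg ht0; linarith
        have hd2' : (0:ℝ) ≤ t*((k:ℝ)-1) := by apply mul_nonneg ht0; linarith
        have hd3' : (0:ℝ) ≤ t*((k:ℝ)-2) := by apply mul_nonneg ht0; linarith
        have hd4' : (0:ℝ) ≤ t*((k:ℝ)-3) := by apply mul_nonneg ht0; linarith
        apply mul_le_mul hf1 _ (by nlinarith [mul_nonneg hd2' hd3', mul_nonneg hd2' hd4', mul_nonneg hd3' hd4', mul_nonneg (mul_nonneg hd2' hd3') hd4']) (Complex.normSq_nonneg _)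
        apply mul_le_mul hf2 _ (by nlinarith [mul_nonneg hd3' hd4']) (Complex.normSq_nonneg _)
        apply mul_le_mul hf3 hf4 (by linarith) (Complex.normSq_nonneg _)
  -- combine
  have hprodnat : (24:ℝ) * ∏ j ∈ Ico 5 (k+1), (j:ℝ) = ((k.factorial : ℕ) : ℝ) := by
    have h1 : (∏ j ∈ Ico 1 5, j) * ∏ j ∈ Ico 5 (k+1), j = k.factorial := by
      rw [Finset.prod_Ico_consecutive _ (by omega : 1 ≤ 5) (by omega : 5 ≤ k+1),
        Finset.Ico_add_one_right_eq_Icc, prodIccNat]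
    have h2 : (∏ j ∈ Ico 1 5, j) = 24 := rfl
    rw [h2] at h1
    push_cast [← h1]
    ring
  apply habs_of_sq' (by positivity)
  rw [hA, hsplit]
  have hIco : (0:ℝ) ≤ ∏ j ∈ Ico 5 (k+1), (j:ℝ) := by positivity
  calc (((k.factorial : ℕ) : ℝ) * (1 + s/(k:ℝ)))^2
      = (576 * (1 + s/(k:ℝ))^2) * (∏ j ∈ Ico 5 (k+1), (j:ℝ))^2 := by
        rw [← hprodnat]; ring
    _ = (576 * (1 + s/(k:ℝ))^2) * ∏ j ∈ Ico 5 (k+1), ((j:ℝ))^2 := by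
        rw [← Finset.prod_pow]
    _ ≤ (∏ j ∈ Ico (1:ℕ) 5, Complex.normSq (z + (j:ℂ)))
        * ∏ j ∈ Ico 5 (k+1), Complex.normSq (z + (j:ℂ)) := by
        apply mul_le_mul hhead htail (Finset.prod_nonneg fun j _ => by positivity)
          (Finset.prod_nonneg fun j _ => Complex.normSq_nonneg _)

set_option maxHeartbeats 1000000 in
theorem stmt_3 (k : ℕ) (hk : 0 < k) (P : Polynomial ℂ)
    (hP : ∀ z : ℂ, z * P.eval z =
      ∏ j ∈ Finset.Icc 1 k, (z + (j : ℂ)) - (Nat.factorial k : ℂ))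
    (z : ℂ) (hz : ‖z + (k + 1 : ℂ)‖ ≥ k + 1) :
    ‖P.eval z‖ ≥ Nat.factorial (k - 1) := by
  change Complex.abs (z + (k + 1 : ℂ)) ≥ k + 1 at hz
  show Complex.abs (P.eval z) ≥ Nat.factorial (k - 1)
  -- extract the real constraint
  have hxs : 0 ≤ (Complex.abs z)^2 + 2*((k:ℝ)+1)*z.re := by
    have h0 : (k:ℝ) + 1 ≤ Complex.abs (z + ((k:ℕ):ℂ) + 1) := by
      have := hz
      rw [ge_iff_le] at this
      calc (k:ℝ) + 1 ≤ Complex.abs (z + ((k:ℂ) + 1)) := this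
        _ = Complex.abs (z + ((k:ℕ):ℂ) + 1) := by ring_nf
    have h1 : ((k:ℝ)+1)^2 ≤ (Complex.abs (z + ((k:ℕ):ℂ) + 1))^2 := by
      apply pow_le_pow_left₀ (by positivity) h0
    rw [Complex.sq_abs, Complex.normSq_apply] at h1
    have e1 : (z + ((k:ℕ):ℂ) + 1).re = z.re + ((k:ℝ)+1) := by
      simp only [Complex.add_re, Complex.natCast_re, Complex.one_re]
      ring
    have e2 : (z + ((k:ℕ):ℂ) + 1).im = z.im := by simp
    rw [e1, e2] at h1
    have e3 : (Complex.abs z)^2 = z.re^2 + z.im^2 := by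
      rw [Complex.sq_abs, Complex.normSq_apply]; ring
    nlinarith [h1]
  match k, hk, hP, hxs with
  | 1, hk, hP, hxs =>
    have hPe : P = Polynomial.C 1 := by
      apply mul_left_cancel₀ (Polynomial.X_ne_zero (R := ℂ))
      apply Polynomial.funext; intro w
      rw [Polynomial.eval_mul, Polynomial.eval_mul, Polynomial.eval_X, hP w]
      rw [show (Icc 1 1 : Finset ℕ) = {1} from rfl]
      simp [Nat.factorial]
    rw [hPe]
    simp [Nat.factorial]
  | 2, hk, hP, hxs =>
    have hPe : P = Polynomial.X + Polynomial.C 3 := by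
      apply mul_left_cancel₀ (Polynomial.X_ne_zero (R := ℂ))
      apply Polynomial.funext; intro w
      rw [Polynomial.eval_mul, Polynomial.eval_mul, Polynomial.eval_X, hP w]
      rw [show (Icc 1 2 : Finset ℕ) = {1, 2} from rfl]
      rw [Finset.prod_insert (by decide), Finset.prod_singleton]
      simp [Nat.factorial]
      push_cast
      ring
    rw [hPe]
    have h9 : (3:ℝ) ≤ Complex.abs (z + 3) := by
      apply habs_of_sq (by norm_num)
      rw [Complex.normSq_apply]
      have e1 : (z + 3).re = z.re + 3 := by simp
      have e2 : (z + 3).im = z.im := by simp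
      rw [e1, e2]
      have e3 : (Complex.abs z)^2 = z.re^2 + z.im^2 := by
        rw [Complex.sq_abs, Complex.normSq_apply]; ring
      push_cast at hxs
      nlinarith [hxs]
    have e : Polynomial.eval z (Polynomial.X + Polynomial.C 3) = z + 3 := by simp
    rw [e]
    have : ((Nat.factorial (2-1) : ℕ) : ℝ) = 1 := by norm_num [Nat.factorial]
    rw [this]
    linarith
  | 3, hk, hP, hxs =>
    have hPe : P = (Polynomial.X + Polynomial.C 3)^2 + Polynomial.C 2 := by
      apply mul_left_cancel₀ (Polynomial.X_ne_zero (R := ℂ))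
      apply Polynomial.funext; intro w
      rw [Polynomial.eval_mul, Polynomial.eval_mul, Polynomial.eval_X, hP w]
      rw [show (Icc 1 3 : Finset ℕ) = {1, 2, 3} from rfl]
      rw [Finset.prod_insert (by decide), Finset.prod_insert (by decide),
        Finset.prod_singleton]
      simp [Nat.factorial]
      push_cast
      ring
    rw [hPe]
    have h9 : (9:ℝ) ≤ Complex.normSq (z + 3) := by
      rw [Complex.normSq_apply]
      have e1 : (z + 3).re = z.re + 3 := by simp
      have e2 : (z + 3).im = z.im := by simp
      rw [e1, e2]
      have e3 : (Complex.abs z)^2 = z.re^2 + z.im^2 := by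
        rw [Complex.sq_abs, Complex.normSq_apply]; ring
      push_cast at hxs
      nlinarith [hxs]
    have e : Polynomial.eval z ((Polynomial.X + Polynomial.C 3)^2 + Polynomial.C 2)
        = (z+3)^2 + 2 := by simp
    rw [e]
    have htri := Complex.abs.add_le ((z+3)^2 + 2) (-2)
    have h8 : Complex.abs ((z+3)^2) = Complex.normSq (z+3) := by
      rw [map_pow, ← Complex.sq_abs]
    simp only [add_neg_cancel_right] at htri
    have h7 : Complex.abs (-2 : ℂ) = 2 := by show ‖(-2 : ℂ)‖ = 2; norm_num
    rw [h7, h8] at htri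
    have : ((Nat.factorial (3-1) : ℕ) : ℝ) = 2 := by norm_num [Nat.factorial]
    rw [this]
    linarith
  | 4, hk, hP, hxs =>
    have hPe : P = (Polynomial.X + Polynomial.C 5) *
        ((Polynomial.X + Polynomial.C 2) * (Polynomial.X + Polynomial.C 3)
          + Polynomial.C 4) := by
      apply mul_left_cancel₀ (Polynomial.X_ne_zero (R := ℂ))
      apply Polynomial.funext; intro w
      rw [Polynomial.eval_mul, Polynomial.eval_mul, Polynomial.eval_X, hP w]
      rw [show (Icc 1 4 : Finset ℕ) = {1, 2, 3, 4} from rfl]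
      rw [Finset.prod_insert (by decide), Finset.prod_insert (by decide),
        Finset.prod_insert (by decide), Finset.prod_singleton]
      simp [Nat.factorial]
      push_cast
      ring
    rw [hPe]
    have e3 : (Complex.abs z)^2 = z.re^2 + z.im^2 := by
      rw [Complex.sq_abs, Complex.normSq_apply]; ring
    push_cast at hxs
    have hb5 : (5:ℝ) ≤ Complex.abs (z + 5) := by
      apply habs_of_sq (by norm_num)
      rw [Complex.normSq_apply]
      have e1 : (z + 5).re = z.re + 5 := by simp
      have e2 : (z + 5).im = z.im := by simp
      rw [e1, e2]; nlinarith [hxs]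
    have hb2 : (2:ℝ) ≤ Complex.abs (z + 2) := by
      apply habs_of_sq (by norm_num)
      rw [Complex.normSq_apply]
      have e1 : (z + 2).re = z.re + 2 := by simp
      have e2 : (z + 2).im = z.im := by simp
      rw [e1, e2]; nlinarith [hxs]
    have hb3 : (3:ℝ) ≤ Complex.abs (z + 3) := by
      apply habs_of_sq (by norm_num)
      rw [Complex.normSq_apply]
      have e1 : (z + 3).re = z.re + 3 := by simp
      have e2 : (z + 3).im = z.im := by simp
      rw [e1, e2]; nlinarith [hxs]
    have e : Polynomial.eval z ((Polynomial.X + Polynomial.C 5) *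
        ((Polynomial.X + Polynomial.C 2) * (Polynomial.X + Polynomial.C 3)
          + Polynomial.C 4)) = (z+5) * ((z+2)*(z+3) + 4) := by simp
    rw [e]
    have htri := Complex.abs.add_le ((z+2)*(z+3) + 4) (-4)
    simp only [add_neg_cancel_right] at htri
    have h7 : Complex.abs (-4 : ℂ) = 4 := by show ‖(-4 : ℂ)‖ = 4; norm_num
    rw [h7, map_mul] at htri
    have hinner : (2:ℝ) ≤ Complex.abs ((z+2)*(z+3) + 4) := by nlinarith
    rw [map_mul]
    have : ((Nat.factorial (4-1) : ℕ) : ℝ) = 6 := by norm_num [Nat.factorial]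
    rw [this]
    calc (6:ℝ) ≤ 5 * 2 := by norm_num
      _ ≤ Complex.abs (z+5) * Complex.abs ((z+2)*(z+3)+4) := by
          apply mul_le_mul hb5 hinner (by norm_num) (Complex.abs.nonneg _)
  | (n+5), hk, hP, hxs =>
    set K := n + 5 with hK
    have hk5 : 5 ≤ K := by omega
    by_cases hc : Complex.abs z ≤ 2/(K:ℝ)
    · -- small |z|
      set Qp : Polynomial ℂ := ∑ m ∈ range K,
        Polynomial.C ((∏ j ∈ Icc (m+2) K, j : ℕ) : ℂ)
          * ∏ j ∈ Icc 1 m, (Polynomial.X + Polynomial.C ((j:ℕ):ℂ)) with hQp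
      have hQeval : ∀ w : ℂ, Qp.eval w
          = ∑ m ∈ range K, ((∏ j ∈ Icc (m+2) K, j : ℕ) : ℂ)
            * ∏ j ∈ Icc 1 m, (w + (j:ℂ)) := by
        intro w
        rw [hQp, Polynomial.eval_finset_sum]
        refine Finset.sum_congr rfl fun m hm => ?_
        rw [Polynomial.eval_mul, Polynomial.eval_C, Polynomial.eval_prod]
        congr 1
        refine Finset.prod_congr rfl fun j hj => ?_
        rw [Polynomial.eval_add, Polynomial.eval_X, Polynomial.eval_C]
      have hPQ : P = Qp := by
        apply mul_left_cancel₀ (Polynomial.X_ne_zero (R := ℂ))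
        apply Polynomial.funext; intro w
        rw [Polynomial.eval_mul, Polynomial.eval_mul, Polynomial.eval_X, hP w,
          hQeval w, tele K w]
      rw [hPQ, hQeval z]
      exact caseA K hk5 z hxs hc
    · push_neg at hc
      have hbig : 2/(K:ℝ) ≤ Complex.abs z := le_of_lt hc
      have hs0 : (0:ℝ) < Complex.abs z := by
        have : (0:ℝ) < 2/(K:ℝ) := by positivity
        linarith
      have hB := caseB K hk5 z hxs hbig
      have habsmul : Complex.abs z * Complex.abs (P.eval z)
          = Complex.abs (∏ j ∈ Icc 1 K, (z + (j:ℂ)) - ((K.factorial : ℕ) : ℂ)) := by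
        rw [← map_mul, hP z]
      have htri := Complex.abs.add_le
        (∏ j ∈ Icc 1 K, (z + (j:ℂ)) - ((K.factorial : ℕ) : ℂ)) ((K.factorial : ℕ) : ℂ)
      rw [sub_add_cancel, Complex.abs_natCast] at htri
      have hKfacpos : (0:ℝ) < ((K.factorial : ℕ) : ℝ) := by
        exact_mod_cast Nat.factorial_pos K
      have hKR : (0:ℝ) < (K:ℝ) := by positivity
      have hfrac : ((K.factorial : ℕ) : ℝ) * (1 + Complex.abs z/(K:ℝ))
          - ((K.factorial : ℕ) : ℝ)
          = (((n+4).factorial : ℕ) : ℝ) * Complex.abs z := by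
        have hKfac : (K:ℝ) * (((n+4).factorial : ℕ) : ℝ) = ((K.factorial : ℕ) : ℝ) := by
          exact_mod_cast Nat.mul_factorial_pred (by omega : K ≠ 0)
        field_simp
        nlinarith [hKfac]
      have hge : (((n+4).factorial : ℕ) : ℝ) * Complex.abs z
          ≤ Complex.abs z * Complex.abs (P.eval z) := by
        rw [habsmul]
        linarith
      rw [ge_iff_le]
      have hfin : (((n+4).factorial : ℕ) : ℝ) ≤ Complex.abs (P.eval z) := by
        have h2 : (((n+4).factorial : ℕ) : ℝ) * Complex.abs z
            ≤ Complex.abs (P.eval z) * Complex.abs z := by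
          calc (((n+4).factorial : ℕ) : ℝ) * Complex.abs z
              ≤ Complex.abs z * Complex.abs (P.eval z) := hge
            _ = Complex.abs (P.eval z) * Complex.abs z := by ring
        exact le_of_mul_le_mul_right h2 hs0
      exact hfin
end

section
/- For every integer k >= 4, one has 2/(k^2 - 1) + ((k-2)/(k+1)) * sum_{i=1}^{k} 1/C(k,i) < 1, where C(k,i) is the binomial coefficient. -/
/-!
Of the terms of the sum, `i = k` contributes `1`, the pairs `i = 1, k - 1` and `i = 2, k - 2`
contribute `2 / k` and `4 / (k (k - 1))`, and each of the `k - 5` remaining ones is at most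
`1 / C(k, 3)` by unimodality of the binomial coefficients. With this bound, one minus the
left-hand side is `(k² - 9k + 34) / (k (k - 1) (k + 1)) > 0` for `k ≥ 5`;
`k = 4` is a computation.
-/

open Finset

theorem Nat.cast_choose_three (K : Type*) [Field K] [CharZero K] (a : ℕ) :
    (a.choose 3 : K) = a * (a - 1) * (a - 2) / 6 := by
  have h : (a.descFactorial 3 : K) = a * (a - 1) * (a - 2) := by
    rw [← descPochhammer_eval_eq_descFactorial]
    simp [descPochhammer_succ_eval]
  rw [Nat.descFactorial_eq_factorial_mul_choose] at h
  rw [eq_div_iff (by norm_num), ← h]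
  push_cast [Nat.factorial]
  ring

theorem Nat.choose_le_choose_of_le_of_le_sub {n a i : ℕ} (hai : a ≤ i) (hin : i ≤ n - a) :
    n.choose a ≤ n.choose i := by
  wlog hi : i ≤ n / 2 generalizing i
  · rw [← Nat.choose_symm (hin.trans (n.sub_le a))]
    exact this (by omega) (by omega) (by omega)
  induction i, hai using Nat.le_induction with
  | base => rfl
  | succ i _ ih => exact (ih (by omega) (by omega)).trans (Nat.choose_le_succ_of_lt_half_left hi)

theorem sum_Icc_inv_choose_le (n a : ℕ) :
    ∑ i ∈ Icc a (n - a), (1 : ℝ) / n.choose i ≤ (n + 1 - 2 * a : ℕ) / n.choose a :=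
  calc ∑ i ∈ Icc a (n - a), (1 : ℝ) / n.choose i
      ≤ ∑ _i ∈ Icc a (n - a), (1 : ℝ) / n.choose a := by
        refine sum_le_sum fun i hi => ?_
        rw [mem_Icc] at hi
        have := Nat.choose_pos (show a ≤ n by omega)
        gcongr
        exact Nat.choose_le_choose_of_le_of_le_sub hi.1 hi.2
    _ = (n + 1 - 2 * a : ℕ) / n.choose a := by
        rw [sum_const, Nat.card_Icc, nsmul_eq_mul, mul_one_div]
        congr 2
        omega

theorem sum_Icc_one_inv_choose_eq {k : ℕ} (hk : 5 ≤ k) :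
    ∑ i ∈ Icc 1 k, (1 : ℝ) / k.choose i =
      1 + 2 / k + 2 / k.choose 2 + ∑ i ∈ Icc 3 (k - 3), (1 : ℝ) / k.choose i := by
  have hsplit : Icc 1 k = {k, 1, k - 1, 2, k - 2} ∪ Icc 3 (k - 3) := by
    ext i
    simp only [mem_union, mem_insert, mem_singleton, mem_Icc]
    omega
  have hdisj : Disjoint ({k, 1, k - 1, 2, k - 2} : Finset ℕ) (Icc 3 (k - 3)) := by
    simp only [disjoint_left, mem_insert, mem_singleton, mem_Icc]
    omega
  rw [hsplit, sum_union hdisj, sum_insert (by simp; omega), sum_insert (by simp; omega),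
    sum_insert (by simp; omega), sum_insert (by simp; omega), sum_singleton, Nat.choose_self,
    Nat.choose_symm (by omega), Nat.choose_symm (by omega), Nat.choose_one_right]
  push_cast
  ring

theorem sum_Icc_one_inv_choose_le {k : ℕ} (hk : 5 ≤ k) :
    ∑ i ∈ Icc 1 k, (1 : ℝ) / k.choose i ≤
      1 + 2 / k + 4 / (k * (k - 1)) + 6 * (k - 5) / (k * (k - 1) * (k - 2)) := by
  have hmiddle := sum_Icc_inv_choose_le k 3
  rw [show k + 1 - 2 * 3 = k - 5 by omega, Nat.cast_sub hk, Nat.cast_ofNat,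
    Nat.cast_choose_three] at hmiddle
  rw [sum_Icc_one_inv_choose_eq hk, Nat.cast_choose_two]
  calc 1 + 2 / (k : ℝ) + 2 / (k * (k - 1) / 2) + ∑ i ∈ Icc 3 (k - 3), (1 : ℝ) / k.choose i
      ≤ 1 + 2 / (k : ℝ) + 2 / (k * (k - 1) / 2) + (k - 5) / (k * (k - 1) * (k - 2) / 6) := by
        gcongr
    _ = _ := by
        rw [div_div_eq_mul_div, div_div_eq_mul_div]
        ring

theorem two_div_sq_sub_one_add_mul_lt_one {x : ℝ} (hx : 2 < x) :
    2 / (x ^ 2 - 1) + (x - 2) / (x + 1) *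
      (1 + 2 / x + 4 / (x * (x - 1)) + 6 * (x - 5) / (x * (x - 1) * (x - 2))) < 1 := by
  have hx1 : 0 < x - 1 := by linarith
  have hx2 : 0 < x - 2 := by linarith
  have key : 1 - (2 / (x ^ 2 - 1) + (x - 2) / (x + 1) *
      (1 + 2 / x + 4 / (x * (x - 1)) + 6 * (x - 5) / (x * (x - 1) * (x - 2)))) =
      (x ^ 2 - 9 * x + 34) / (x * (x - 1) * (x + 1)) := by
    rw [show x ^ 2 - 1 = (x - 1) * (x + 1) by ring]
    field_simp [hx1.ne', hx2.ne']
    ring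
  have hpos : 0 < (x ^ 2 - 9 * x + 34) / (x * (x - 1) * (x + 1)) := by
    apply div_pos
    · nlinarith [sq_nonneg (2 * x - 9)]
    · positivity
  linarith

theorem stmt_7 (k : ℕ) (hk : 4 ≤ k) :
    2 / ((k : ℝ) ^ 2 - 1) + (((k : ℝ) - 2) / ((k : ℝ) + 1)) *
      ∑ i ∈ Finset.Icc 1 k, (1 : ℝ) / (Nat.choose k i) < 1 := by
  obtain rfl | hk5 := (show k = 4 ∨ 5 ≤ k by omega)
  · norm_num [show Icc 1 4 = {1, 2, 3, 4} from rfl, Nat.choose]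
  have hk2 : (2 : ℝ) < k := by exact_mod_cast (by omega : 2 < k)
  calc 2 / ((k : ℝ) ^ 2 - 1) + ((k - 2) / (k + 1)) * ∑ i ∈ Icc 1 k, (1 : ℝ) / k.choose i
      ≤ 2 / ((k : ℝ) ^ 2 - 1) + ((k - 2) / (k + 1)) *
          (1 + 2 / k + 4 / (k * (k - 1)) + 6 * (k - 5) / (k * (k - 1) * (k - 2))) := by
        have : (0 : ℝ) ≤ k - 2 := by linarith
        gcongr
        exact sum_Icc_one_inv_choose_le hk5
    _ < 1 := two_div_sq_sub_one_add_mul_lt_one hk2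
end

section
/- For every integer k >= 8, the sum over i from 1 to k of the reciprocals of the binomial coefficients satisfies sum_{i=1}^{k} 1/C(k,i) < 1 + 3/k. -/
lemma aux_mono (k r : ℕ) : ∀ s, r ≤ s → s ≤ k/2 → Nat.choose k r ≤ Nat.choose k s := by
  intro s
  induction s with
  | zero =>
    intro h _
    have : r = 0 := by omega
    simp [this]
  | succ n ih =>
    intro hr hs
    rcases Nat.lt_or_ge r (n+1) with h | h
    · exact (ih (by omega) (by omega)).trans (Nat.choose_le_succ_of_lt_half_left (by omega))
    · have : r = n+1 := by omega
      simp [this]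

lemma choose_three_le {k i : ℕ} (hk : 6 ≤ k) (h3 : 3 ≤ i) (hi : i ≤ k - 3) :
    Nat.choose k 3 ≤ Nat.choose k i := by
  rcases le_or_gt i (k/2) with h | h
  · exact aux_mono k 3 i h3 h
  · rw [← Nat.choose_symm (show i ≤ k by omega)]
    exact aux_mono k 3 (k - i) (by omega) (by omega)

lemma six_choose3 (n : ℕ) : 6 * Nat.choose (n+3) 3 = (n+3)*(n+2)*(n+1) := by
  have h := Nat.descFactorial_eq_factorial_mul_choose (n+3) 3
  simp [Nat.descFactorial_succ, Nat.factorial] at h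
  rw [← h]; ring

lemma two_choose2 (n : ℕ) : 2 * Nat.choose (n+2) 2 = (n+2)*(n+1) := by
  have h := Nat.descFactorial_eq_factorial_mul_choose (n+2) 2
  simp [Nat.descFactorial_succ, Nat.factorial] at h
  rw [← h]; ring

theorem stmt_8 (k : ℕ) (hk : 8 ≤ k) :
    ∑ i ∈ Finset.Icc 1 k, (1 : ℝ) / (Nat.choose k i) < 1 + 3 / (k : ℝ) := by
  rcases eq_or_lt_of_le hk with h8 | h9
  · subst h8
    have h : Finset.Icc 1 8 = ({1,2,3,4,5,6,7,8} : Finset ℕ) := by decide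
    rw [h]
    norm_num [Finset.sum_insert, Finset.mem_insert, Nat.choose]
  · obtain ⟨m, rfl⟩ : ∃ m, k = m + 9 := ⟨k - 9, by omega⟩
    have hset : Finset.Icc 1 (m+9) =
        insert 1 (insert 2 (insert (m+7) (insert (m+8) (insert (m+9) (Finset.Icc 3 (m+6)))))) := by
      ext x
      simp only [Finset.mem_Icc, Finset.mem_insert]
      omega
    rw [hset, Finset.sum_insert (by simp only [Finset.mem_insert, Finset.mem_Icc]; omega),
        Finset.sum_insert (by simp only [Finset.mem_insert, Finset.mem_Icc]; omega),
        Finset.sum_insert (by simp only [Finset.mem_insert, Finset.mem_Icc]; omega),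
        Finset.sum_insert (by simp only [Finset.mem_insert, Finset.mem_Icc]; omega),
        Finset.sum_insert (by simp only [Finset.mem_Icc]; omega)]
    rw [Nat.choose_one_right, Nat.choose_self,
        show m+8 = (m+9)-1 by omega, Nat.choose_symm (by omega), Nat.choose_one_right,
        show m+7 = (m+9)-2 by omega, Nat.choose_symm (by omega)]
    set x : ℝ := (m : ℝ) with hxdef
    have hx : (0:ℝ) ≤ x := Nat.cast_nonneg m
    have hC2 : ((Nat.choose (m+9) 2 : ℕ) : ℝ) = (x+9)*(x+8)/2 := by
      have h : 2 * Nat.choose (m+9) 2 = (m+9)*(m+8) := two_choose2 (m+7)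
      have h' := congrArg (Nat.cast : ℕ → ℝ) h
      push_cast at h'
      linarith
    have hC3 : ((Nat.choose (m+9) 3 : ℕ) : ℝ) = (x+9)*(x+8)*(x+7)/6 := by
      have h : 6 * Nat.choose (m+9) 3 = (m+9)*(m+8)*(m+7) := six_choose3 (m+6)
      have h' := congrArg (Nat.cast : ℕ → ℝ) h
      push_cast at h'
      linarith
    have hpos3 : 0 < Nat.choose (m+9) 3 := Nat.choose_pos (by omega)
    have hmid : ∑ i ∈ Finset.Icc 3 (m+6), (1:ℝ)/(Nat.choose (m+9) i) ≤
        (x+4) * (1/((Nat.choose (m+9) 3 : ℕ) : ℝ)) := by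
      have hcard : (Finset.Icc 3 (m+6)).card = m+4 := by rw [Nat.card_Icc]; omega
      calc ∑ i ∈ Finset.Icc 3 (m+6), (1:ℝ)/(Nat.choose (m+9) i)
          ≤ (Finset.Icc 3 (m+6)).card • ((1:ℝ)/((Nat.choose (m+9) 3 : ℕ) : ℝ)) := by
            apply Finset.sum_le_card_nsmul
            intro i hi
            simp only [Finset.mem_Icc] at hi
            apply one_div_le_one_div_of_le (by exact_mod_cast hpos3)
            exact_mod_cast choose_three_le (by omega) hi.1 (by omega)
        _ = (x+4) * (1/((Nat.choose (m+9) 3 : ℕ) : ℝ)) := by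
            rw [hcard, nsmul_eq_mul]; push_cast; ring
    rw [hC2] at *
    rw [hC3] at *
    push_cast
    have h7 : (0:ℝ) < x+7 := by linarith
    have h8' : (0:ℝ) < x+8 := by linarith
    have h9' : (0:ℝ) < x+9 := by linarith
    have key : 2*(1/(x+9)) + 2*(1/((x+9)*(x+8)/2)) + (x+4)*(1/((x+9)*(x+8)*(x+7)/6)) < 3/(x+9) := by
      have hne7 : x+7 ≠ 0 := ne_of_gt h7
      have hne8 : x+8 ≠ 0 := ne_of_gt h8'
      have hne9 : x+9 ≠ 0 := ne_of_gt h9'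
      rw [← sub_pos, show (3:ℝ)/(x+9) - (2*(1/(x+9)) + 2*(1/((x+9)*(x+8)/2)) +
          (x+4)*(1/((x+9)*(x+8)*(x+7)/6)))
          = (x*x+5*x+4)/((x+9)*(x+8)*(x+7)) by field_simp; ring]
      positivity
    linarith [hmid]
end

section
/- For every integer k >= 3, the sum over i from 2 to k of reciprocals of binomial coefficients satisfies sum_{i=2}^{k} 1/C(k,i) <= 1 + 21/(10k). -/
set_option maxHeartbeats 1000000

lemma choose_mono_half (n a : ℕ) : ∀ b, a ≤ b → b ≤ n/2 → Nat.choose n a ≤ Nat.choose n b := by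
  intro b
  induction b with
  | zero => intro hab _; simp [Nat.le_zero.mp hab]
  | succ b ih =>
    intro hab hb
    rcases Nat.lt_or_ge a (b+1) with h | h
    · exact (ih (Nat.lt_succ_iff.mp h) (le_trans (Nat.le_succ b) hb)).trans
        (Nat.choose_le_succ_of_lt_half_left hb)
    · have : a = b + 1 := le_antisymm hab h
      simp [this]

lemma choose3_le (k i : ℕ) (h3 : 3 ≤ i) (hi : i ≤ k - 3) (hk : 12 ≤ k) :
    Nat.choose k 3 ≤ Nat.choose k i := by
  rcases le_or_gt i (k/2) with h | h
  · exact choose_mono_half k 3 i h3 h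
  · rw [← Nat.choose_symm (by omega : i ≤ k)]
    exact choose_mono_half k 3 (k - i) (by omega) (by omega)

lemma final_ineq (x : ℝ) (hx : 0 ≤ x) :
    1 / ((x+12)*(x+11)/2) + (x+7)*(1/((x+10)*(x+11)*(x+12)/6))
      + 1 / ((x+12)*(x+11)/2) + 1/(x+12) + 1 ≤ 1 + 21/(10*(x+12)) := by
  have h1 : (0:ℝ) < x + 10 := by linarith
  have h2 : (0:ℝ) < x + 11 := by linarith
  have h3 : (0:ℝ) < x + 12 := by linarith
  have t1 : (1:ℝ) / ((x + 12) * (x + 11) / 2) ≤ (2/11) * (1 / (x + 12)) := by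
    rw [mul_one_div, div_le_div_iff₀ (by positivity) h3]
    nlinarith
  have t2 : (x + 7) * (1 / ((x + 10) * (x + 11) * (x + 12) / 6))
      ≤ (6/11) * (1 / (x + 12)) := by
    rw [mul_one_div, mul_one_div, div_le_div_iff₀ (by positivity) h3]
    nlinarith [mul_nonneg hx hx]
  have t5 : (21/11 : ℝ) * (1 / (x + 12)) ≤ 21 / (10 * (x + 12)) := by
    rw [mul_one_div, div_le_div_iff₀ h3 (by positivity)]
    nlinarith
  linarith

theorem stmt_9 (k : ℕ) (hk : 3 ≤ k) :
    ∑ i ∈ Finset.Icc 2 k, (1 : ℝ) / (Nat.choose k i) ≤ 1 + 21 / (10 * (k : ℝ)) := by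
  rcases Nat.lt_or_ge k 12 with hsmall | hbig
  · interval_cases k <;> norm_num [Finset.sum_Icc_succ_top, Nat.choose]
  obtain ⟨m, rfl⟩ : ∃ m, k = m + 12 := ⟨k - 12, by omega⟩
  set k := m + 12 with hkdef
  have hpeel : ∑ i ∈ Finset.Icc 2 k, (1 : ℝ) / (Nat.choose k i)
      = (1 : ℝ) / (Nat.choose k 2) + ∑ i ∈ Finset.Ioc 2 (m + 9), (1 : ℝ) / (Nat.choose k i)
        + 1 / (Nat.choose k (m+10)) + 1 / (Nat.choose k (m+11)) + 1 / (Nat.choose k (m+12)) := by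
    rw [show k = (m+11) + 1 from rfl, Finset.sum_Icc_succ_top (by omega),
      show m + 11 = (m+10)+1 from rfl, Finset.sum_Icc_succ_top (by omega),
      show m + 10 = (m+9)+1 from rfl, Finset.sum_Icc_succ_top (by omega),
      ← Finset.Ioc_insert_left (by omega : (2:ℕ) ≤ m+9), Finset.sum_insert (by simp)]
  have hcard : (Finset.Ioc 2 (m+9)).card = m + 7 := by simp
  have hc3pos : (0:ℝ) < (Nat.choose k 3 : ℝ) := by
    exact_mod_cast Nat.choose_pos (by omega)
  have hmid : ∑ i ∈ Finset.Ioc 2 (m+9), (1:ℝ)/(Nat.choose k i)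
      ≤ (m+7 : ℝ) * (1/(Nat.choose k 3)) := by
    have h := Finset.sum_le_card_nsmul (Finset.Ioc 2 (m+9))
      (fun i => (1:ℝ)/(Nat.choose k i)) (1/(Nat.choose k 3)) ?_
    · rw [hcard] at h
      simpa [nsmul_eq_mul] using h
    · intro i hi
      simp only [Finset.mem_Ioc] at hi
      apply one_div_le_one_div_of_le hc3pos
      exact_mod_cast choose3_le k i (by omega) (by omega) (by omega)
  have hd : Nat.descFactorial k 3 = (m+10)*((m+11)*((m+12)*1)) := by
    simp [Nat.descFactorial_succ, hkdef, Nat.add_sub_cancel]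
  have h6 : 6 * Nat.choose k 3 = (m+10)*((m+11)*((m+12)*1)) := by
    rw [← hd, Nat.descFactorial_eq_factorial_mul_choose]; rfl
  have hc3 : (Nat.choose k 3 : ℝ) = (m+10)*(m+11)*(m+12)/6 := by
    have h6r : (6:ℝ) * (Nat.choose k 3) = (m+10)*((m+11)*((m+12)*1)) := by
      exact_mod_cast h6
    rw [eq_div_iff (by norm_num)]
    linear_combination h6r
  have hc2 : (Nat.choose k 2 : ℝ) = (m+12)*(m+11)/2 := by
    rw [Nat.cast_choose_two]
    push_cast [hkdef]
    ring
  have e10 : Nat.choose k (m+10) = Nat.choose k 2 := by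
    rw [show m+10 = k - 2 by omega, Nat.choose_symm (by omega)]
  have e11 : Nat.choose k (m+11) = k := by
    rw [show m+11 = k - 1 by omega, Nat.choose_symm (by omega), Nat.choose_one_right]
  have e12 : Nat.choose k (m+12) = 1 := by
    rw [show m+12 = k from rfl, Nat.choose_self]
  rw [hpeel, e10, e11, e12]
  have hm : (0:ℝ) ≤ (m:ℝ) := Nat.cast_nonneg m
  have hkr : (k:ℝ) = (m:ℝ) + 12 := by push_cast [hkdef]; ring
  calc (1 : ℝ) / (Nat.choose k 2) + ∑ i ∈ Finset.Ioc 2 (m + 9), (1 : ℝ) / (Nat.choose k i)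
        + 1 / (Nat.choose k 2) + 1 / (k : ℕ) + 1 / (1 : ℕ)
      ≤ (1 : ℝ) / (Nat.choose k 2) + (m+7 : ℝ) * (1/(Nat.choose k 3))
        + 1 / (Nat.choose k 2) + 1 / (k : ℕ) + 1 / (1 : ℕ) := by linarith
    _ ≤ 1 + 21 / (10 * (k : ℝ)) := by
        rw [hc2, hc3]
        push_cast [hkr]
        rw [one_div_one]
        exact final_ineq (m:ℝ) (Nat.cast_nonneg m)
end

section
/- Let u >= 0 be an integer, k >= 3 an integer, d in {2,3,4}, and z a complex number with |z| > u + k + 2. Then |z + u| > 1 + (d-1)/|z + u + 3 - d| + (k+1)!/(|z+u+k+1| * |z+u+k| * ... * |z+u+3| * |z+u+3-d|). -/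
/-! Put `w = z + u`. The reverse triangle inequality gives `‖w‖ > k + 2`,
`‖w + 3 - d‖ > k + 1` (as `|3 - d| ≤ 1`) and `‖w + j‖ > k + 2 - j`, so that
`∏_{j=3}^{k+1} ‖w + j‖ ≥ (k - 1)!`. Hence the middle term is `< 3 / (k + 1) ≤ 1` and the last one
is `< (k + 1)! / ((k - 1)! (k + 1)) = k`, and the right-hand side is `< k + 2 < ‖w‖`. -/

open Finset Nat

lemma prod_Icc_three_sub_eq_factorial (k : ℕ) :
    ∏ j ∈ Icc 3 (k + 1), (k + 2 - j) = (k - 1)! := by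
  rw [← Ico_add_one_right_eq_Icc, add_assoc, one_add_one_eq_two,
    prod_Ico_reflect (fun j => j) 3 (le_succ (k + 2))]
  rcases k with _ | k
  · rfl
  · simp [show k + 1 + 2 + 1 - 3 = k + 1 by omega]

lemma norm_sub_natCast_le_norm_add (w : ℂ) (n : ℕ) : ‖w‖ - n ≤ ‖w + n‖ := by
  simpa using norm_sub_le_norm_add w (n : ℂ)

lemma factorial_le_prod_norm_add (w : ℂ) (k : ℕ) (hw : (k : ℝ) + 2 ≤ ‖w‖) :
    ((k - 1)! : ℝ) ≤ ∏ j ∈ Icc 3 (k + 1), ‖w + j‖ := by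
  rw [← prod_Icc_three_sub_eq_factorial, Nat.cast_prod]
  refine prod_le_prod (fun _ _ => by positivity) fun j hj => ?_
  have hjk : j ≤ k + 2 := by rw [mem_Icc] at hj; omega
  rw [Nat.cast_sub hjk]
  push_cast
  linarith [norm_sub_natCast_le_norm_add w j]

lemma factorial_succ_div_lt {k : ℕ} (hk : 1 ≤ k) {P B : ℝ} (hP : ((k - 1)! : ℝ) ≤ P)
    (hB : (k : ℝ) + 1 < B) : ((k + 1)! : ℝ) / (P * B) < k := by
  have hfac : ((k + 1)! : ℝ) = (k + 1) * k * (k - 1)! := by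
    obtain ⟨n, rfl⟩ : ∃ n, k = n + 1 := ⟨k - 1, by omega⟩
    push_cast [factorial_succ, add_tsub_cancel_right]
    ring
  have hfac_pos : (0 : ℝ) < (k - 1)! := by exact_mod_cast factorial_pos _
  have hPB : (k + 1) * ((k - 1)! : ℝ) < P * B := by nlinarith
  rw [div_lt_iff₀ (by nlinarith), hfac]
  calc ((k : ℝ) + 1) * k * (k - 1)! = k * ((k + 1) * (k - 1)!) := by ring
    _ < k * (P * B) := by gcongr

theorem stmt_16 (u k d : ℕ) (hk : 3 ≤ k) (hd : d = 2 ∨ d = 3 ∨ d = 4)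
    (z : ℂ) (hz : ‖z‖ > (u : ℝ) + k + 2) :
    ‖(z + (u : ℂ))‖ >
      1 + ((d : ℝ) - 1) / ‖(z + (u : ℂ) + 3 - (d : ℂ))‖ +
        (Nat.factorial (k + 1) : ℝ) /
          ((∏ j ∈ Finset.Icc 3 (k + 1), ‖(z + (u : ℂ) + (j : ℂ))‖) *
            ‖(z + (u : ℂ) + 3 - (d : ℂ))‖) := by
  set w := z + (u : ℂ)
  have hk' : (3 : ℝ) ≤ k := by exact_mod_cast hk
  have hw : (k : ℝ) + 2 < ‖w‖ := by linarith [norm_sub_natCast_le_norm_add z u]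
  have hB : (k : ℝ) + 1 < ‖w + 3 - d‖ := by
    have h3d : ‖(3 - d : ℂ)‖ ≤ 1 := by rcases hd with rfl | rfl | rfl <;> norm_num
    rw [add_sub_assoc]
    linarith [norm_sub_le_norm_add w (3 - d)]
  have hfirst : ((d : ℝ) - 1) / ‖w + 3 - d‖ < 1 := by
    have hd3 : (d : ℝ) - 1 ≤ 3 := by rcases hd with rfl | rfl | rfl <;> norm_num
    rw [div_lt_one (by linarith)]
    linarith
  have hsecond := factorial_succ_div_lt (by omega) (factorial_le_prod_norm_add w k hw.le) hB
  linarith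
end

section
/- Let k be an odd positive integer, set a_i = i for i = 1, ..., k and g_i = i for all i, and define P(z) = prod_{j=1}^{k}(z+j) + sum_{i=1}^{k} i! * prod_{j=i+1}^{k}(z+j). Then P(-(k+1)) = 0; that is, the bound |z| <= a_k + 1 in the Polynomial Perturbation Lemma is attained. -/
/-!
At `z = -(k + 1)` every factor `z + j` with `i < j ≤ k` equals `j - k - 1`, so the tail product
is `(-1)^(k-i) (k-i)!`, and absorbing the leading product as the `i = 0` term turns `P(-(k+1))`
into `∑_{i=0}^{k} (-1)^(k-i) i! (k-i)!`. For odd `k` the terms `i` and `k - i` cancel.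
-/

open Finset Nat

variable {R : Type*} [CommRing R]

theorem neg_one_pow_sub_of_odd {k i : ℕ} (hk : Odd k) (hi : i ≤ k) :
    (-1 : R) ^ (k - i) = -(-1) ^ i := by
  rcases Nat.even_or_odd i with hi' | hi'
  · rw [((Nat.odd_sub hi).2 (iff_of_true hk hi')).neg_one_pow, hi'.neg_one_pow]
  · rw [((Nat.even_sub' hi).2 (iff_of_true hk hi')).neg_one_pow, hi'.neg_one_pow, neg_neg]

theorem sum_Icc_neg_one_pow_mul_eq_zero_of_odd {k : ℕ} (hk : Odd k) (g : ℕ → R)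
    (hg : ∀ i ≤ k, g (k - i) = g i) :
    ∑ i ∈ Icc 0 k, (-1) ^ i * g i = 0 := by
  refine sum_involution (fun i _ => k - i) (fun i hi => ?_) (fun i hi _ => ?_)
    (fun i hi => ?_) (fun i hi => ?_) <;> rw [mem_Icc] at hi
  · rw [hg i hi.2, neg_one_pow_sub_of_odd hk hi.2]
    ring
  · intro h
    exact Nat.not_even_iff_odd.2 hk ⟨i, by omega⟩
  · exact mem_Icc.2 ⟨Nat.zero_le _, Nat.sub_le _ _⟩
  · omega

theorem prod_range_cast_sub (n : ℕ) :
    ∏ t ∈ range n, ((t : R) - n) = (-1) ^ n * n ! := by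
  induction n with
  | zero => simp
  | succ n ih =>
    rw [prod_range_succ']
    simp only [Nat.cast_succ, add_sub_add_right_eq_sub, ih, factorial_succ, cast_mul]
    ring

theorem prod_Icc_neg_add_cast (i k : ℕ) (hi : i ≤ k) :
    ∏ j ∈ Icc (i + 1) k, (-((k : R) + 1) + j) = (-1) ^ (k - i) * (k - i)! := by
  obtain ⟨n, rfl⟩ := Nat.exists_eq_add_of_le hi
  rw [← Ico_add_one_right_eq_Icc, prod_Ico_eq_prod_range, Nat.add_sub_cancel_left,
    show i + n + 1 - (i + 1) = n by omega, ← prod_range_cast_sub]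
  refine prod_congr rfl fun t _ => ?_
  push_cast
  ring

theorem stmt_17_general (k : ℕ) (hodd : Odd k) :
    (∏ j ∈ Finset.Icc 1 k, (-(((k : ℂ)) + 1) + (j : ℂ))) +
      ∑ i ∈ Finset.Icc 1 k, (Nat.factorial i : ℂ) *
        ∏ j ∈ Finset.Icc (i + 1) k, (-(((k : ℂ)) + 1) + (j : ℂ)) = 0 := by
  have h_absorb : (∏ j ∈ Icc 1 k, (-((k : ℂ) + 1) + j)) +
      ∑ i ∈ Icc 1 k, (i ! : ℂ) * ∏ j ∈ Icc (i + 1) k, (-((k : ℂ) + 1) + j) =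
      ∑ i ∈ Icc 0 k, (i ! : ℂ) * ∏ j ∈ Icc (i + 1) k, (-((k : ℂ) + 1) + j) := by
    rw [Icc_eq_cons_Ioc k.zero_le, sum_cons, ← Icc_add_one_left_eq_Ioc]
    simp
  rw [h_absorb, ← neg_eq_zero, ← sum_Icc_neg_one_pow_mul_eq_zero_of_odd hodd
    (fun i => (i ! * (k - i)! : ℂ)) (fun i hi => by simp [Nat.sub_sub_self hi, mul_comm]),
    ← sum_neg_distrib]
  refine sum_congr rfl fun i hi => ?_
  rw [prod_Icc_neg_add_cast i k (mem_Icc.1 hi).2, neg_one_pow_sub_of_odd hodd (mem_Icc.1 hi).2]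
  ring

theorem stmt_17 (k : ℕ) (hk : 0 < k) (hodd : Odd k) :
    (∏ j ∈ Finset.Icc 1 k, (-(((k : ℂ)) + 1) + (j : ℂ))) +
      ∑ i ∈ Finset.Icc 1 k, (Nat.factorial i : ℂ) *
        ∏ j ∈ Finset.Icc (i + 1) k, (-(((k : ℂ)) + 1) + (j : ℂ)) = 0 :=
  stmt_17_general k hodd
end
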